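/- Let I be finite, (a_J)_{J⊆I} nonnegative with a_∅ = 0, and define for configurations σ, σ' the quantity D(σ,σ') = ∑_{J ⊆ I : J ⊄ q(σ,σ')} a_J, where q(σ,σ') = {i : σ_i = σ'_i}. Suppose that the family {q(σ,τ) : σ, τ ∈ Σ} of all pairwise overlaps is totally ordered by inclusion (a chain). Then √D satisfies the strong triangle inequality: for all σ, τ, ρ, D(σ,ρ) ≤ max(D(σ,τ), D(τ,ρ)). -/
import Mathlib


open Classical in
/-- If all pairwise overlaps are totally ordered by inclusion, then
`D(σ,σ') = ∑_{J ⊄ q(σ,σ')} a_J` satisfies the strong triangle inequality. -/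
theorem strong_triangle_of_chain_overlaps {I : Type*} [Fintype I] [DecidableEq I]
    {S : I → Type*} [∀ i, Fintype (S i)]
    (a : Finset I → ℝ) (ha : ∀ J, 0 ≤ a J) (ha0 : a ∅ = 0)
    (q : (∀ i, S i) → (∀ i, S i) → Set I)
    (hq : ∀ σ τ, q σ τ = {i | σ i = τ i})
    (D : (∀ i, S i) → (∀ i, S i) → ℝ)
    (hD : ∀ σ σ', D σ σ' =
      ∑ J ∈ Finset.univ.filter (fun J : Finset I => ¬ (↑J : Set I) ⊆ q σ σ'), a J)
    (hchain : ∀ σ τ σ' τ', q σ τ ⊆ q σ' τ' ∨ q σ' τ' ⊆ q σ τ) :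
    ∀ σ τ ρ, D σ ρ ≤ max (D σ τ) (D τ ρ) := by
  have mono : ∀ σ τ σ' τ', q σ τ ⊆ q σ' τ' → D σ' τ' ≤ D σ τ := by
    intro σ τ σ' τ' h
    rw [hD, hD]
    apply Finset.sum_le_sum_of_subset_of_nonneg
    · intro J hJ
      simp only [Finset.mem_filter, Finset.mem_univ, true_and] at *
      exact fun hc => hJ (hc.trans h)
    · intro J _ _; exact ha J
  intro σ τ ρ
  have hinter : q σ τ ∩ q τ ρ ⊆ q σ ρ := by
    rw [hq, hq, hq]
    intro i hi
    exact hi.1.trans hi.2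
  rcases hchain σ τ τ ρ with h | h
  · have : q σ τ ⊆ q σ ρ := fun i hi => hinter ⟨hi, h hi⟩
    exact le_max_of_le_left (mono _ _ _ _ this)
  · have : q τ ρ ⊆ q σ ρ := fun i hi => hinter ⟨h hi, hi⟩
    exact le_max_of_le_right (mono _ _ _ _ this)
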